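/- arXiv:1512.02666 — 4 statements merged into one kernel-verified Lean document; each statement's English description precedes it below -/
import Mathlib

section
/- (Partial regression / Frisch–Waugh–Lovell) Let y ∈ ℝⁿ, x_j ∈ ℝⁿ, and X_S ∈ ℝ^{n×k}, and suppose the matrix Z = [x_j, X_S] ∈ ℝ^{n×(k+1)} has full column rank. Let M_S = I_n − X_S(X_SᵀX_S)^{−1}X_Sᵀ and x̆_j = M_S x_j. Then the coefficient on x_j in the least-squares regression of y on Z, namely the first entry of (ZᵀZ)^{−1}Zᵀy, equals (x̆_jᵀ x̆_j)^{−1} x̆_jᵀ y. -/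
/-!
The candidate coefficient vector `β = (b, (XᵀX)⁻¹Xᵀ(y - b x))`, with `b = (x̆ᵀx̆)⁻¹x̆ᵀy`, has
residual `y - Zβ = M (y - b x)`. This residual is orthogonal to the columns of `X` because
`XᵀM = 0`, and to `x` because `xᵀM(y - b x) = x̆ᵀy - b x̆ᵀx̆ = 0` (using `M = Mᵀ = M²`). So `β`
solves the normal equations, which have a unique solution since `Z` has full column rank.
-/

open Matrix

namespace Matrix

variable {m p R : Type*}

section LeastSquares

variable [Fintype m] [Fintype p] [DecidableEq p]

theorem isUnit_det_transpose_mul_self_of_injective (A : Matrix m p ℝ)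
    (hA : Function.Injective A.mulVec) : IsUnit (Aᵀ * A).det :=
  (isUnit_iff_isUnit_det _).mp <| by
    simpa [conjTranspose_eq_transpose_of_trivial] using (PosDef.conjTranspose_mul_self A hA).isUnit

theorem inv_transpose_mul_self_mulVec_eq_of_normal_eq [CommRing R] {Z : Matrix m p R}
    (hZ : IsUnit (Zᵀ * Z).det) {y : m → R} {β : p → R} (hβ : Zᵀ *ᵥ (y - Z *ᵥ β) = 0) :
    (Zᵀ * Z)⁻¹ *ᵥ (Zᵀ *ᵥ y) = β := by
  rw [mulVec_sub, sub_eq_zero, mulVec_mulVec] at hβ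
  rw [hβ, mulVec_mulVec, nonsing_inv_mul _ hZ, one_mulVec]

variable [DecidableEq m] [CommRing R] (X : Matrix m p R)

/-- The matrix `M_S` of the statement for `X_S = X` (a junk value when `XᵀX` is singular). -/
noncomputable def annihilator : Matrix m m R := 1 - X * (Xᵀ * X)⁻¹ * Xᵀ

theorem transpose_annihilator : X.annihilatorᵀ = X.annihilator := by
  rw [annihilator, transpose_sub, transpose_one, transpose_mul, transpose_mul,
    transpose_transpose, transpose_nonsing_inv, transpose_mul, transpose_transpose,
    Matrix.mul_assoc]

theorem dotProduct_annihilator_mulVec (u v : m → R) :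
    u ⬝ᵥ X.annihilator *ᵥ v = X.annihilator *ᵥ u ⬝ᵥ v := by
  rw [dotProduct_mulVec, ← mulVec_transpose, transpose_annihilator, dotProduct_comm]

theorem sub_annihilator_mulVec (v : m → R) :
    v - X.annihilator *ᵥ v = X *ᵥ ((Xᵀ * X)⁻¹ *ᵥ (Xᵀ *ᵥ v)) := by
  rw [annihilator, sub_mulVec, one_mulVec, sub_sub_cancel, mulVec_mulVec, mulVec_mulVec,
    Matrix.mul_assoc]

variable {X}

theorem transpose_mul_annihilator (hX : IsUnit (Xᵀ * X).det) : Xᵀ * X.annihilator = 0 := by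
  rw [annihilator, Matrix.mul_sub, Matrix.mul_one, ← Matrix.mul_assoc, ← Matrix.mul_assoc,
    mul_nonsing_inv _ hX, Matrix.one_mul, sub_self]

theorem annihilator_mul_self (hX : IsUnit (Xᵀ * X).det) :
    X.annihilator * X.annihilator = X.annihilator := by
  conv_lhs => enter [1]; rw [annihilator]
  rw [Matrix.sub_mul, Matrix.one_mul, Matrix.mul_assoc, transpose_mul_annihilator hX,
    Matrix.mul_zero, sub_zero]

theorem annihilator_mulVec_dotProduct_self (hX : IsUnit (Xᵀ * X).det) (v : m → R) :
    X.annihilator *ᵥ v ⬝ᵥ X.annihilator *ᵥ v = X.annihilator *ᵥ v ⬝ᵥ v := by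
  rw [dotProduct_annihilator_mulVec, mulVec_mulVec, annihilator_mul_self hX]

end LeastSquares

section ConsColumn

variable {k : ℕ} [CommSemiring R] {Z : Matrix m (Fin (k + 1)) R} {x : m → R}
  {X : Matrix m (Fin k) R}

theorem mulVec_eq_of_cons_cols (hZ : ∀ i, Z i = Fin.cons (x i) (X i)) (u : Fin (k + 1) → R) :
    Z *ᵥ u = u 0 • x + X *ᵥ Fin.tail u := by
  ext i
  simp [mulVec, dotProduct, Fin.sum_univ_succ, hZ, Fin.tail, mul_comm]

theorem transpose_mulVec_eq_of_cons_cols [Fintype m] (hZ : ∀ i, Z i = Fin.cons (x i) (X i))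
    (v : m → R) :
    Zᵀ *ᵥ v = Fin.cons (x ⬝ᵥ v) (Xᵀ *ᵥ v) := by
  ext l
  refine Fin.cases ?_ (fun l => ?_) l <;> simp [mulVec, dotProduct, hZ]

theorem injective_mulVec_of_cons_cols (hZ : ∀ i, Z i = Fin.cons (x i) (X i))
    (hZinj : Function.Injective Z.mulVec) : Function.Injective X.mulVec := by
  intro a b hab
  have := @hZinj (Fin.cons 0 a) (Fin.cons 0 b) (by simp [mulVec_eq_of_cons_cols hZ, hab])
  simpa using congrArg Fin.tail this

end ConsColumn

end Matrix

/-- **Partial regression (Frisch–Waugh–Lovell).**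
Let `Z = [x_j, X_S] ∈ ℝ^{n×(k+1)}` have full column rank, `M_S = I - X_S(X_SᵀX_S)⁻¹X_Sᵀ`
and `x̆_j = M_S x_j`.  Then the coefficient on `x_j` in the least-squares regression of `y`
on `Z` (the first entry of `(ZᵀZ)⁻¹Zᵀy`) equals `(x̆_jᵀx̆_j)⁻¹ x̆_jᵀ y`. -/
theorem stmt_4 {n k : ℕ} (y xj : Fin n → ℝ) (XS : Matrix (Fin n) (Fin k) ℝ)
    (Z : Matrix (Fin n) (Fin (k + 1)) ℝ)
    (hZ : ∀ i, Z i = Fin.cons (xj i) (XS i))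
    (hrank : LinearIndependent ℝ (fun l : Fin (k + 1) => Zᵀ l))
    (MS : Matrix (Fin n) (Fin n) ℝ)
    (hMS : MS = 1 - XS * (XSᵀ * XS)⁻¹ * XSᵀ)
    (xbreve : Fin n → ℝ) (hxb : xbreve = MS.mulVec xj) :
    (Zᵀ * Z)⁻¹.mulVec (Zᵀ.mulVec y) 0 = (xbreve ⬝ᵥ xbreve)⁻¹ * (xbreve ⬝ᵥ y) := by
  change MS = XS.annihilator at hMS
  subst hMS
  have hZinj : Function.Injective Z.mulVec := mulVec_injective_iff.mpr hrank
  have hXS :=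
    isUnit_det_transpose_mul_self_of_injective XS (injective_mulVec_of_cons_cols hZ hZinj)
  set b := (xbreve ⬝ᵥ xbreve)⁻¹ * (xbreve ⬝ᵥ y)
  -- the coefficients on `XS` are those of the regression of `y - b • xj` on `XS`
  set w := (XSᵀ * XS)⁻¹ *ᵥ (XSᵀ *ᵥ (y - b • xj))
  have hres : y - Z *ᵥ Fin.cons b w = XS.annihilator *ᵥ (y - b • xj) := by
    rw [mulVec_eq_of_cons_cols hZ, Fin.cons_zero, Fin.tail_cons, ← sub_annihilator_mulVec]
    abel
  have hb : b * (xbreve ⬝ᵥ xbreve) = xbreve ⬝ᵥ y := by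
    obtain rfl | hx := eq_or_ne xbreve 0
    · simp
    · rw [mul_comm]
      exact mul_inv_cancel_left₀ (dotProduct_self_eq_zero.not.mpr hx) _
  suffices hnormal : Zᵀ *ᵥ (y - Z *ᵥ Fin.cons b w) = 0 by
    rw [inv_transpose_mul_self_mulVec_eq_of_normal_eq
      (isUnit_det_transpose_mul_self_of_injective Z hZinj) hnormal, Fin.cons_zero]
  rw [hres, transpose_mulVec_eq_of_cons_cols hZ, mulVec_mulVec, transpose_mul_annihilator hXS,
    zero_mulVec, dotProduct_annihilator_mulVec, ← hxb, dotProduct_sub, dotProduct_smul,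
    smul_eq_mul, hxb, ← annihilator_mulVec_dotProduct_self hXS, ← hxb, hb, sub_self]
  exact cons_zero_zero
end

section
/- Let H be a real inner product space, let v₁,…,v_s be orthonormal vectors spanning a subspace V, and let w₁,…,w_m (m ≥ 1) be pairwise orthogonal vectors in H such that each w_j decomposes as w_j = Σ_{k=1}^s γ_{jk} v_k + u_j with u_j ⊥ V, ‖u_j‖ = 1, and ‖w_j‖² ≤ c. Then, writing γ_j = (γ_{j1},…,γ_{js}) ∈ ℝ^s, one has ‖Σ_{j=1}^m γ_j‖₂² ≤ m·c. -/
/-!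
Summing the decompositions, `Σ_j γ_{jk} = ⟪v_k, Σ_j w_j⟫` because each `u_j` is orthogonal to
the `v_k`. Bessel's inequality bounds the squared coefficients by `‖Σ_j w_j‖²`, which by
Pythagoras equals `Σ_j ‖w_j‖² ≤ m c`.
-/

open Finset

section

variable {𝕜 E ι : Type*} [RCLike 𝕜] [NormedAddCommGroup E] [InnerProductSpace 𝕜 E] [Fintype ι]

theorem Orthonormal.inner_right_fintype_add {v : ι → E} (hv : Orthonormal 𝕜 v) (l : ι → 𝕜)
    {u : E} (hu : ∀ i, inner 𝕜 (v i) u = 0) (i : ι) :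
    inner 𝕜 (v i) (∑ i, l i • v i + u) = l i := by
  rw [inner_add_right, hv.inner_right_fintype, hu, add_zero]

theorem norm_sum_sq_eq_sum_norm_sq_of_pairwise_inner_eq_zero {w : ι → E}
    (hw : Pairwise fun i j => inner 𝕜 (w i) (w j) = 0) :
    ‖∑ i, w i‖ ^ 2 = ∑ i, ‖w i‖ ^ 2 := by
  classical
  have h : inner 𝕜 (∑ i, w i) (∑ i, w i) = ∑ i, inner 𝕜 (w i) (w i) := by
    simp_rw [sum_inner, inner_sum]
    exact sum_congr rfl fun i _ => sum_eq_single i (fun j _ hji => hw hji.symm) (by simp)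
  have h' := congrArg RCLike.re h
  simp only [inner_self_eq_norm_sq, map_sum] at h'
  exact h'

end

theorem stmt_8_general {H : Type*} [NormedAddCommGroup H] [InnerProductSpace ℝ H]
    {s m : ℕ} (v : Fin s → H) (hv : Orthonormal ℝ v)
    (w u : Fin m → H) (γ : Fin m → Fin s → ℝ) (c : ℝ)
    (hw : ∀ j, w j = (∑ k, γ j k • v k) + u j)
    (hu_perp : ∀ j, ∀ z ∈ Submodule.span ℝ (Set.range v), (inner ℝ (u j) z : ℝ) = 0)
    (hw_norm : ∀ j, ‖w j‖ ^ 2 ≤ c)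
    (hw_ortho : ∀ j l, j ≠ l → (inner ℝ (w j) (w l) : ℝ) = 0) :
    ∑ k, (∑ j, γ j k) ^ 2 ≤ m * c := by
  have hvu : ∀ j k, inner ℝ (v k) (u j) = 0 := fun j k => by
    rw [real_inner_comm]
    exact hu_perp j _ (Submodule.subset_span ⟨k, rfl⟩)
  have hcoeff : ∀ k, ∑ j, γ j k = inner ℝ (v k) (∑ j, w j) := fun k => by
    simp only [inner_sum, hw, hv.inner_right_fintype_add _ (hvu _)]
  calc ∑ k, (∑ j, γ j k) ^ 2 = ∑ k, ‖inner ℝ (v k) (∑ j, w j)‖ ^ 2 := by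
        simp only [hcoeff, Real.norm_eq_abs, sq_abs]
    _ ≤ ‖∑ j, w j‖ ^ 2 := hv.sum_inner_products_le _
    _ = ∑ j, ‖w j‖ ^ 2 :=
        norm_sum_sq_eq_sum_norm_sq_of_pairwise_inner_eq_zero (𝕜 := ℝ) fun j l => hw_ortho j l
    _ ≤ ∑ _j : Fin m, c := sum_le_sum fun j _ => hw_norm j
    _ = m * c := by simp

/-- **Aggregate projection bound for an orthogonal family.**
Let `v₁,…,v_s` be orthonormal spanning `V`, and `w₁,…,w_m` (`m ≥ 1`) pairwise orthogonal
with `w_j = Σ_k γ_{jk} v_k + u_j`, `u_j ⊥ V`, `‖u_j‖ = 1` and `‖w_j‖² ≤ c`.  Then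
`‖Σ_j γ_j‖₂² ≤ m·c`. -/
theorem stmt_8 {H : Type*} [NormedAddCommGroup H] [InnerProductSpace ℝ H]
    {s m : ℕ} (hm : 1 ≤ m) (v : Fin s → H) (hv : Orthonormal ℝ v)
    (w u : Fin m → H) (γ : Fin m → Fin s → ℝ) (c : ℝ)
    (hw : ∀ j, w j = (∑ k, γ j k • v k) + u j)
    (hu_perp : ∀ j, ∀ z ∈ Submodule.span ℝ (Set.range v), (inner ℝ (u j) z : ℝ) = 0)
    (hu_norm : ∀ j, ‖u j‖ = 1)
    (hw_norm : ∀ j, ‖w j‖ ^ 2 ≤ c)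
    (hw_ortho : ∀ j l, j ≠ l → (inner ℝ (w j) (w l) : ℝ) = 0) :
    ∑ k, (∑ j, γ j k) ^ 2 ≤ m * c :=
  stmt_8_general v hv w u γ c hw hu_perp hw_norm hw_ortho
end

section
/- Let B ∈ ℝ^{s×s} be symmetric with all diagonal entries B_{kk} ≤ 1, and let c > 0 be such that B + cI is positive semidefinite. Then there exist matrices E, F ∈ ℝ^{s×s} with B = EᵀF such that every row of E and every row of F has Euclidean norm at most 1 + c + √c. -/
/-!
Let `D` be the symmetric square root of `B + cI`. Then `B = (D + √c I)ᵀ (D - √c I)`, and the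
squared norm of the `i`-th row of `D` is `(D²)ᵢᵢ = Bᵢᵢ + c ≤ 1 + c`, so by the triangle
inequality the rows of `D ± √c I` have norm at most `√(1 + c) + √c ≤ 1 + c + √c`.
-/

open Matrix

lemma sqrt_sum_sq_eq_norm_toLp {n : Type*} [Fintype n] (v : n → ℝ) :
    √(∑ j, v j ^ 2) = ‖WithLp.toLp 2 v‖ := by
  simp [EuclideanSpace.norm_eq]

lemma sqrt_sum_sq_add_pi_single_le {n : Type*} [Fintype n] [DecidableEq n] (v : n → ℝ) (i : n)
    (a : ℝ) :
    √(∑ j, (v + Pi.single i a : n → ℝ) j ^ 2) ≤ √(∑ j, v j ^ 2) + |a| := by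
  simpa only [sqrt_sum_sq_eq_norm_toLp, WithLp.toLp_add, PiLp.toLp_single,
    PiLp.norm_single, Real.norm_eq_abs] using
    norm_add_le (WithLp.toLp 2 v) (WithLp.toLp 2 (Pi.single i a))

lemma smul_one_row {n : Type*} [DecidableEq n] (a : ℝ) (i : n) :
    (a • (1 : Matrix n n ℝ)) i = Pi.single i a := by
  ext j; simp [Matrix.one_apply, Pi.single_apply, eq_comm]

lemma sum_sq_row_eq_mul_transpose_apply {m n : Type*} [Fintype n] (A : Matrix m n ℝ) (i : m) :
    ∑ j, A i j ^ 2 = (A * Aᵀ) i i := by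
  simp [Matrix.mul_apply, sq]

lemma add_smul_one_transpose_mul_sub_smul_one {n R : Type*} [Fintype n] [DecidableEq n]
    [CommRing R] {D : Matrix n n R} (hD : Dᵀ = D) (r : R) :
    (D + r • 1)ᵀ * (D - r • 1) = D * D - (r * r) • 1 := by
  rw [transpose_add, hD, transpose_smul, transpose_one, add_mul, mul_sub, mul_sub]
  simp only [Matrix.smul_mul, Matrix.mul_smul, Matrix.mul_one, Matrix.one_mul, smul_smul]
  abel

lemma Matrix.PosSemidef.exists_transpose_eq_mul_self_eq {n : Type*} [Fintype n] [DecidableEq n]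
    {M : Matrix n n ℝ} (hM : M.PosSemidef) : ∃ D : Matrix n n ℝ, Dᵀ = D ∧ D * D = M := by
  open scoped MatrixOrder in
  exact ⟨CFC.sqrt M, (CFC.sqrt_nonneg M).posSemidef.1, CFC.sqrt_mul_sqrt_self M hM.nonneg⟩

theorem stmt_9_general {s : ℕ} (B : Matrix (Fin s) (Fin s) ℝ)
    (hdiag : ∀ k, B k k ≤ 1) (c : ℝ) (hc : 0 < c)
    (hpsd : (B + c • (1 : Matrix (Fin s) (Fin s) ℝ)).PosSemidef) :
    ∃ E F : Matrix (Fin s) (Fin s) ℝ, B = Eᵀ * F ∧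
      (∀ i, Real.sqrt (∑ j, E i j ^ 2) ≤ 1 + c + Real.sqrt c) ∧
      (∀ i, Real.sqrt (∑ j, F i j ^ 2) ≤ 1 + c + Real.sqrt c) := by
  obtain ⟨D, hDt, hDD⟩ := hpsd.exists_transpose_eq_mul_self_eq
  have hrow : ∀ i, √(∑ j, D i j ^ 2) ≤ 1 + c := fun i => by
    rw [sum_sq_row_eq_mul_transpose_apply, hDt, hDD, Real.sqrt_le_left (by linarith)]
    simp only [Matrix.add_apply, Matrix.smul_apply, one_apply_eq, smul_eq_mul, mul_one]
    nlinarith [hdiag i]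
  have hshift : ∀ r : ℝ, |r| = √c → ∀ i, √(∑ j, (D + r • 1) i j ^ 2) ≤ 1 + c + √c := by
    intro r hr i
    rw [show (D + r • 1) i = D i + Pi.single i r by rw [← smul_one_row]; rfl]
    linarith [sqrt_sum_sq_add_pi_single_le (D i) i r, hrow i]
  have hsqrt : |√c| = √c := abs_of_nonneg (Real.sqrt_nonneg c)
  refine ⟨D + √c • 1, D - √c • 1, ?_, hshift _ hsqrt, ?_⟩
  · rw [add_smul_one_transpose_mul_sub_smul_one hDt, hDD, Real.mul_self_sqrt hc.le,
      add_sub_cancel_right]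
  · rw [sub_eq_add_neg, ← neg_smul]
    exact hshift _ (by rw [abs_neg, hsqrt])

/-- **Factorization of an almost-PSD matrix with bounded rows.**
Let `B ∈ ℝ^{s×s}` be symmetric with diagonal entries `≤ 1` and `c > 0` with `B + cI`
positive semidefinite.  Then `B = EᵀF` for matrices `E, F` each of whose rows has
Euclidean norm at most `1 + c + √c`. -/
theorem stmt_9 {s : ℕ} (B : Matrix (Fin s) (Fin s) ℝ) (hB : B.IsSymm)
    (hdiag : ∀ k, B k k ≤ 1) (c : ℝ) (hc : 0 < c)
    (hpsd : (B + c • (1 : Matrix (Fin s) (Fin s) ℝ)).PosSemidef) :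
    ∃ E F : Matrix (Fin s) (Fin s) ℝ, B = Eᵀ * F ∧
      (∀ i, Real.sqrt (∑ j, E i j ^ 2) ≤ 1 + c + Real.sqrt c) ∧
      (∀ i, Real.sqrt (∑ j, F i j ^ 2) ≤ 1 + c + Real.sqrt c) :=
  stmt_9_general B hdiag c hc hpsd
end

section
/- Let M ∈ ℝ^{p×p} be positive semidefinite, let T ⊆ {1,…,p} with |T| = k ≥ 1, and let d ∈ ℝ^p be supported on T. Suppose the principal submatrix M_{T,T} has minimum eigenvalue at least 1/c for some c > 0. Let β ∈ ℝ^p with ‖β‖_∞ ≤ A for some A ≥ 0, and suppose dᵀMd + 2βᵀd ≤ D for some D ≥ 0. Then ‖d‖₁ ≤ max{ 4Ack, √(2kDc) }. -/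
/-!
Write `S = ‖d‖₁` and `Q = dᵀMd`. Cauchy–Schwarz on the support `T` and the eigenvalue bound give
`S² ≤ k‖d‖₂² ≤ kcQ`, and `‖β‖_∞ ≤ A` gives `|βᵀd| ≤ AS`. If the linear term is small,
`|2βᵀd| ≤ Q/2`, then `Q ≤ 2D` and `S ≤ √(2kDc)`; otherwise `Q < 4AS`, so `S² < 4AckS` and
`S ≤ 4Ack`.
-/

open Matrix

theorem abs_dotProduct_le_mul_sum_abs {ι : Type*} [Fintype ι] {β : ι → ℝ} {A : ℝ}
    (hβ : ∀ j, |β j| ≤ A) (d : ι → ℝ) : |β ⬝ᵥ d| ≤ A * ∑ j, |d j| :=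
  calc |β ⬝ᵥ d| ≤ ∑ j, |β j * d j| := Finset.abs_sum_le_sum_abs _ _
    _ ≤ ∑ j, A * |d j| := Finset.sum_le_sum fun j _ => by
        rw [abs_mul]; exact mul_le_mul_of_nonneg_right (hβ j) (abs_nonneg _)
    _ = A * ∑ j, |d j| := (Finset.mul_sum _ _ _).symm

theorem sq_sum_abs_le_card_mul_sum_sq {ι : Type*} [Fintype ι] {T : Finset ι} {d : ι → ℝ}
    (hd : ∀ j ∉ T, d j = 0) : (∑ j, |d j|) ^ 2 ≤ T.card * ∑ j, d j ^ 2 := by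
  have hT : ∀ f : ℝ → ℝ, f 0 = 0 → ∑ j ∈ T, f (d j) = ∑ j, f (d j) := fun f hf =>
    Finset.sum_subset (Finset.subset_univ T) fun j _ hj => by rw [hd j hj, hf]
  rw [← hT _ abs_zero, ← hT (· ^ 2) (zero_pow two_ne_zero)]
  simpa only [sq_abs] using sq_sum_le_card_mul_sum_sq (s := T) (f := fun j => |d j|)

/-- The scalar core of the argument, with `S = ‖d‖₁`, `Q = dᵀMd`, `b = βᵀd` and `κ = kc`. -/
theorem le_max_of_sq_le_mul_of_add_two_mul_le {S Q b A κ D : ℝ} (hS : 0 ≤ S) (hκ : 0 ≤ κ)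
    (hSQ : S ^ 2 ≤ κ * Q) (hb : |b| ≤ A * S) (hQD : Q + 2 * b ≤ D) :
    S ≤ max (4 * A * κ) (√(2 * κ * D)) := by
  by_cases hsmall : |2 * b| ≤ Q / 2
  · have hQ : Q ≤ 2 * D := by linarith [neg_le_of_abs_le hsmall]
    refine le_max_of_le_right (Real.le_sqrt_of_sq_le ?_)
    nlinarith
  · have hQ : Q < 4 * (A * S) := by
      rw [abs_mul, abs_two] at hsmall
      linarith
    rcases hS.eq_or_lt with rfl | hSpos
    · exact le_max_of_le_right (Real.sqrt_nonneg _)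
    · refine le_max_of_le_left (le_of_mul_le_mul_right ?_ hSpos)
      nlinarith [mul_le_mul_of_nonneg_left hQ.le hκ]

theorem stmt_13_general {p : ℕ} (M : Matrix (Fin p) (Fin p) ℝ)
    (T : Finset (Fin p)) (k : ℕ) (hk : T.card = k)
    (d : Fin p → ℝ) (hd : ∀ j ∉ T, d j = 0)
    (c : ℝ) (hc : 0 < c)
    (heig : ∀ v : Fin p → ℝ, (∀ j ∉ T, v j = 0) →
        (1 / c) * ∑ j, v j ^ 2 ≤ v ⬝ᵥ M.mulVec v)
    (β : Fin p → ℝ) (A : ℝ) (hβ : ∀ j, |β j| ≤ A)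
    (D : ℝ) (hquad : d ⬝ᵥ M.mulVec d + 2 * (β ⬝ᵥ d) ≤ D) :
    ∑ j, |d j| ≤ max (4 * A * c * k) (Real.sqrt (2 * k * D * c)) := by
  have hl2_sq : ∑ j, d j ^ 2 ≤ c * (d ⬝ᵥ M *ᵥ d) := by
    have := heig d hd
    rwa [one_div, inv_mul_le_iff₀ hc] at this
  have hl1_sq : (∑ j, |d j|) ^ 2 ≤ (k * c) * (d ⬝ᵥ M *ᵥ d) := by
    calc (∑ j, |d j|) ^ 2 ≤ k * ∑ j, d j ^ 2 := hk ▸ sq_sum_abs_le_card_mul_sum_sq hd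
      _ ≤ k * (c * (d ⬝ᵥ M *ᵥ d)) := by gcongr
      _ = (k * c) * (d ⬝ᵥ M *ᵥ d) := by ring
  have key := le_max_of_sq_le_mul_of_add_two_mul_le (Finset.sum_nonneg fun j _ => abs_nonneg _)
    (by positivity) hl1_sq (abs_dotProduct_le_mul_sum_abs hβ d) hquad
  rwa [show 4 * A * c * k = 4 * A * (k * c) by ring, show 2 * k * D * c = 2 * (k * c) * D by ring]

/-- **ℓ¹ bound for a vector supported on `T` from a quadratic inequality.**
If `M` is PSD, `d` is supported on `T` with `|T| = k ≥ 1`, the principal submatrix `M_{T,T}`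
has minimum eigenvalue `≥ 1/c` (stated via the quadratic form on vectors supported on `T`),
`‖β‖_∞ ≤ A`, and `dᵀMd + 2βᵀd ≤ D`, then `‖d‖₁ ≤ max{4Ack, √(2kDc)}`. -/
theorem stmt_13 {p : ℕ} (M : Matrix (Fin p) (Fin p) ℝ) (hM : M.PosSemidef)
    (T : Finset (Fin p)) (k : ℕ) (hk : T.card = k) (hk1 : 1 ≤ k)
    (d : Fin p → ℝ) (hd : ∀ j ∉ T, d j = 0)
    (c : ℝ) (hc : 0 < c)
    (heig : ∀ v : Fin p → ℝ, (∀ j ∉ T, v j = 0) →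
        (1 / c) * ∑ j, v j ^ 2 ≤ v ⬝ᵥ M.mulVec v)
    (β : Fin p → ℝ) (A : ℝ) (hA : 0 ≤ A) (hβ : ∀ j, |β j| ≤ A)
    (D : ℝ) (hD : 0 ≤ D) (hquad : d ⬝ᵥ M.mulVec d + 2 * (β ⬝ᵥ d) ≤ D) :
    ∑ j, |d j| ≤ max (4 * A * c * k) (Real.sqrt (2 * k * D * c)) :=
  stmt_13_general M T k hk d hd c hc heig β A hβ D hquad
end
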